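/- arXiv:math/0512179 — 5 statements merged into one kernel-verified Lean document; each statement's English description precedes it below -/
import Mathlib

section
/- Let x_1 < ... < x_n and y_1 < ... < y_n be real numbers. Then for every unitary matrix U in U(n), tr(U X U† Y) ≤ Σ_{i=1}^n x_i y_i, where X = diag(x_1,...,x_n) and Y = diag(y_1,...,y_n). -/
open Matrix

theorem stmt1 (n : ℕ) (x y : Fin n → ℝ)
    (hx : StrictMono x) (hy : StrictMono y)
    (U : Matrix (Fin n) (Fin n) ℂ) (hU : U ∈ Matrix.unitaryGroup (Fin n) ℂ) :
    (Matrix.trace (U * Matrix.diagonal (fun i => (x i : ℂ)) * Uᴴ *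
      Matrix.diagonal (fun i => (y i : ℂ)))).re ≤ ∑ i, x i * y i := by
  classical
  set P : Matrix (Fin n) (Fin n) ℝ := fun i j => Complex.normSq (U i j) with hP
  have hUU : U * Uᴴ = 1 := (Matrix.mem_unitaryGroup_iff.mp hU)
  have hUU' : Uᴴ * U = 1 := (Matrix.mem_unitaryGroup_iff'.mp hU)
  -- the diagonal entries
  have key : ∀ i, ((U * Matrix.diagonal (fun i => (x i : ℂ)) * Uᴴ *
      Matrix.diagonal (fun i => (y i : ℂ))) i i) = ((∑ j, P i j * (x j * y i) : ℝ) : ℂ) := by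
    intro i
    rw [Matrix.mul_diagonal, Matrix.mul_apply]
    push_cast
    rw [Finset.sum_mul]
    refine Finset.sum_congr rfl fun j _ => ?_
    rw [Matrix.mul_diagonal, Matrix.conjTranspose_apply]
    calc U i j * (x j : ℂ) * star (U i j) * (y i : ℂ)
        = U i j * (starRingEnd ℂ) (U i j) * ((x j : ℂ) * (y i : ℂ)) := by
          rw [RCLike.star_def]; ring
      _ = (Complex.normSq (U i j) : ℂ) * ((x j : ℂ) * (y i : ℂ)) := by
          rw [Complex.mul_conj]
  have htr : (Matrix.trace (U * Matrix.diagonal (fun i => (x i : ℂ)) * Uᴴ *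
      Matrix.diagonal (fun i => (y i : ℂ)))).re = ∑ i, ∑ j, P i j * (x j * y i) := by
    rw [Matrix.trace]
    simp only [Matrix.diag_apply, key, ← Complex.ofReal_sum, Complex.ofReal_re]
  rw [htr]
  -- P is doubly stochastic
  have hPds : P ∈ doublyStochastic ℝ (Fin n) := by
    rw [mem_doublyStochastic_iff_sum]
    refine ⟨fun i j => Complex.normSq_nonneg _, fun i => ?_, fun j => ?_⟩
    · have h1 : ((U * Uᴴ) i i).re = (1 : ℝ) := by rw [hUU]; simp
      rw [Matrix.mul_apply] at h1
      rw [← h1, Complex.re_sum]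
      refine Finset.sum_congr rfl fun j _ => ?_
      rw [Matrix.conjTranspose_apply, RCLike.star_def, Complex.mul_conj, Complex.ofReal_re]
    · have h1 : ((Uᴴ * U) j j).re = (1 : ℝ) := by rw [hUU']; simp
      rw [Matrix.mul_apply] at h1
      rw [← h1, Complex.re_sum]
      refine Finset.sum_congr rfl fun i _ => ?_
      rw [Matrix.conjTranspose_apply, RCLike.star_def, mul_comm, Complex.mul_conj,
        Complex.ofReal_re]
  obtain ⟨w, hw0, hw1, hwP⟩ := exists_eq_sum_perm_of_mem_doublyStochastic hPds
  have hmono : Monovary x y := fun i j hij => (hx.le_iff_le.mpr (hy.lt_iff_lt.mp hij).le)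
  have hperm : ∀ (σ : Equiv.Perm (Fin n)) i,
      ∑ j, (σ.permMatrix ℝ) i j * (x j * y i) = x (σ i) * y i := by
    intro σ i
    rw [Finset.sum_eq_single (σ i)]
    · simp [Equiv.Perm.permMatrix, PEquiv.toMatrix_apply, Equiv.toPEquiv_apply]
    · intro b _ hb
      simp [Equiv.Perm.permMatrix, PEquiv.toMatrix_apply, Equiv.toPEquiv_apply,
        Option.mem_def, Ne.symm hb]
    · simp
  calc ∑ i, ∑ j, P i j * (x j * y i)
      = ∑ i, ∑ σ : Equiv.Perm (Fin n), w σ * (x (σ i) * y i) := by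
        refine Finset.sum_congr rfl fun i _ => ?_
        rw [← hwP]
        simp only [Matrix.sum_apply, Matrix.smul_apply, smul_eq_mul, Finset.sum_mul]
        rw [Finset.sum_comm]
        refine Finset.sum_congr rfl fun σ _ => ?_
        simp only [mul_assoc]
        rw [← Finset.mul_sum, hperm]
    _ = ∑ σ : Equiv.Perm (Fin n), w σ * ∑ i, x (σ i) * y i := by
        rw [Finset.sum_comm]
        simp [Finset.mul_sum]
    _ ≤ ∑ σ : Equiv.Perm (Fin n), w σ * ∑ i, x i * y i := by
        refine Finset.sum_le_sum fun σ _ => ?_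
        exact mul_le_mul_of_nonneg_left (hmono.sum_comp_perm_mul_le_sum_mul) (hw0 σ)
    _ = ∑ i, x i * y i := by rw [← Finset.sum_mul, hw1, one_mul]
end

section
/- Let x_1 < ... < x_n and y_1 < ... < y_n be real numbers. Then for every unitary matrix U in U(n), tr(U X U† Y) ≥ Σ_{i=1}^n x_{n-i+1} y_i, where X = diag(x_1,...,x_n) and Y = diag(y_1,...,y_n). -/
open Matrix Finset

lemma rearr_aux (n : ℕ) (x y : Fin n → ℝ) (hx : StrictMono x) (hy : StrictMono y)
    (σ : Equiv.Perm (Fin n)) : (∑ i, x i.rev * y i) ≤ ∑ i, x (σ i) * y i := by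
  have haf : Antivary (fun i => x (Fin.rev i)) y := by
    intro i j hij
    have : i < j := hy.lt_iff_lt.mp hij
    exact (hx.le_iff_le.mpr (Fin.rev_le_rev.mpr this.le))
  have := haf.sum_smul_le_sum_comp_perm_smul (σ := σ.trans (Fin.revPerm))
  simpa [smul_eq_mul, Fin.rev_rev] using this

theorem stmt2 (n : ℕ) (x y : Fin n → ℝ)
    (hx : StrictMono x) (hy : StrictMono y)
    (U : Matrix (Fin n) (Fin n) ℂ) (hU : U ∈ Matrix.unitaryGroup (Fin n) ℂ) :
    (∑ i, x i.rev * y i) ≤ (Matrix.trace (U * Matrix.diagonal (fun i => (x i : ℂ)) * Uᴴ *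
      Matrix.diagonal (fun i => (y i : ℂ)))).re := by
  set D : Matrix (Fin n) (Fin n) ℝ := fun j i => Complex.normSq (U j i) with hDdef
  have hUU : U * Uᴴ = 1 := (mem_unitaryGroup_iff.mp hU)
  have hUU' : Uᴴ * U = 1 := (mem_unitaryGroup_iff'.mp hU)
  have hrow : ∀ j, ∑ i, D j i = 1 := by
    intro j
    have h := congrArg (fun M => M j j) hUU
    simp only [Matrix.mul_apply, Matrix.one_apply_eq, conjTranspose_apply] at h
    have h2 : ((∑ i, Complex.normSq (U j i) : ℝ) : ℂ) = ((1:ℝ):ℂ) := by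
      push_cast
      simpa [Complex.star_def, Complex.mul_conj] using h
    exact_mod_cast h2
  have hcol : ∀ i, ∑ j, D j i = 1 := by
    intro i
    have h := congrArg (fun M => M i i) hUU'
    simp only [Matrix.mul_apply, Matrix.one_apply_eq, conjTranspose_apply] at h
    have h2 : ((∑ j, Complex.normSq (U j i) : ℝ) : ℂ) = ((1:ℝ):ℂ) := by
      push_cast
      simpa [Complex.star_def, mul_comm, Complex.mul_conj] using h
    exact_mod_cast h2
  have hD : D ∈ doublyStochastic ℝ (Fin n) := by
    rw [mem_doublyStochastic_iff_sum]
    exact ⟨fun j i => Complex.normSq_nonneg _, hrow, hcol⟩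
  have hterm : ∀ j, (∑ k, U j k * (x k : ℂ) * star (U j k)) * (y j : ℂ)
      = ((∑ k, D j k * (x k * y j) : ℝ) : ℂ) := by
    intro j
    rw [Finset.sum_mul]
    push_cast
    refine Finset.sum_congr rfl fun k _ => ?_
    rw [hDdef]
    push_cast
    rw [Complex.star_def, ← Complex.mul_conj]
    ring
  have htr : (Matrix.trace (U * Matrix.diagonal (fun i => (x i : ℂ)) * Uᴴ *
      Matrix.diagonal (fun i => (y i : ℂ)))).re = ∑ j, ∑ i, D j i * (x i * y j) := by
    rw [Matrix.trace]
    simp only [Matrix.diag, Matrix.mul_diagonal]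
    simp only [Matrix.mul_apply, Matrix.diagonal_apply, conjTranspose_apply, mul_ite, mul_zero,
      ite_mul, zero_mul, Finset.sum_ite_eq, Finset.sum_ite_eq', Finset.mem_univ, if_true]
    simp only [hterm]
    rw [← Complex.ofReal_sum, Complex.ofReal_re]
  rw [htr]
  obtain ⟨w, hw0, hw1, hwD⟩ := exists_eq_sum_perm_of_mem_doublyStochastic hD
  have hPij : ∀ (σ : Equiv.Perm (Fin n)) j,
      ∑ i, (σ.permMatrix ℝ) j i * (x i * y j) = x (σ j) * y j := by
    intro σ j
    simp [Equiv.Perm.permMatrix, PEquiv.toMatrix_apply, Equiv.toPEquiv_apply, ite_mul,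
      Finset.sum_ite_eq]
  have hexp : ∑ j, ∑ i, D j i * (x i * y j) = ∑ σ : Equiv.Perm (Fin n),
      w σ * ∑ j, x (σ j) * y j := by
    rw [← hwD]
    have hent : ∀ j i, (∑ σ : Equiv.Perm (Fin n), w σ • σ.permMatrix ℝ) j i
        = ∑ σ : Equiv.Perm (Fin n), w σ * (σ.permMatrix ℝ) j i := by
      intro j i; simp only [Matrix.sum_apply, Matrix.smul_apply, smul_eq_mul]
    simp only [hent, Finset.sum_mul]
    rw [show (∑ j, ∑ i, ∑ σ : Equiv.Perm (Fin n), w σ * (σ.permMatrix ℝ) j i * (x i * y j))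
        = ∑ j, ∑ σ : Equiv.Perm (Fin n), ∑ i, w σ * (σ.permMatrix ℝ) j i * (x i * y j) from
      Finset.sum_congr rfl fun j _ => Finset.sum_comm]
    rw [Finset.sum_comm]
    refine Finset.sum_congr rfl fun σ _ => ?_
    rw [Finset.mul_sum]
    refine Finset.sum_congr rfl fun j _ => ?_
    rw [← hPij σ j, Finset.mul_sum]
    exact Finset.sum_congr rfl fun i _ => (mul_assoc _ _ _)
  rw [hexp]
  calc (∑ i, x i.rev * y i) = ∑ σ : Equiv.Perm (Fin n), w σ * ∑ i, x i.rev * y i := by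
        rw [← Finset.sum_mul, hw1, one_mul]
    _ ≤ ∑ σ : Equiv.Perm (Fin n), w σ * ∑ j, x (σ j) * y j := by
        refine Finset.sum_le_sum fun σ _ => ?_
        exact mul_le_mul_of_nonneg_left (rearr_aux n x y hx hy σ) (hw0 σ)
end

section
/- Let x_1 < ... < x_n and y_1 < ... < y_n be real numbers. Then det(exp(x_i y_j))_{i,j=1}^n ≥ c_n · Δ(x) · Δ(y) · Π_{i=1}^n exp(x_i y_{n-i+1}), where c_n = (Π_{i=1}^n i!)^{-1} and Δ denotes the Vandermonde determinant Π_{i<j}(x_j − x_i). -/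
noncomputable def vandermonde (n : ℕ) (x : Fin n → ℝ) : ℝ :=
  ∏ i : Fin n, ∏ j ∈ Finset.Ioi i, (x j - x i)

noncomputable def cConst (n : ℕ) : ℝ :=
  ((∏ i ∈ Finset.Icc 1 n, Nat.factorial i : ℕ) : ℝ)⁻¹

/-!
We prove the sharper bound `Δ(x) Δ(y) ∏ᵢ exp (xᵢ y_{n-i+1}) ≤ (∏_{k<n} k!) det (exp (xᵢ yⱼ))` by
induction on `n`. Translating `x` by a constant multiplies both sides by the same positive factor,
so we may assume `x₀ = 0`. The first row of the matrix is then all ones, and subtracting adjacent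
columns leaves the entries `exp (xᵢ yⱼ₊₁) - exp (xᵢ yⱼ) = xᵢ ∫_{yⱼ}^{yⱼ₊₁} exp (xᵢ t) dt`. By
multilinearity the determinant is `∏ᵢ xᵢ` times the integral of `det (exp (xᵢ zⱼ))` over the points
`z` interlacing `y`. Such a `z` is monotone, so the induction hypothesis bounds the integrand, and
`xᵢ ≥ 0` lets us replace `z` by the lower endpoints `y` in the exponential factor. The same column
operations on the Vandermonde matrix show that `Δ(z)` integrates to `Δ(y) / n!` over the box.
-/

open MeasureTheory Finset Real
open scoped Nat

namespace Matrix

theorem det_eq_det_sub_of_row_zero_eq_one {R : Type*} [CommRing R] {n : ℕ}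
    (A : Matrix (Fin (n + 1)) (Fin (n + 1)) R) (hA : ∀ j, A 0 j = 1) :
    A.det = det (of fun i j : Fin n => A i.succ j.succ - A i.succ j.castSucc) := by
  let B : Matrix (Fin (n + 1)) (Fin (n + 1)) R :=
    of fun i => Fin.cons (A i 0) fun j => A i j.succ - A i j.castSucc
  have hAB : A.det = B.det :=
    det_eq_of_forall_col_eq_smul_add_pred 1 (fun _ => rfl) fun i j => by simp [B]
  rw [hAB, det_succ_row_zero, Fin.sum_univ_succ, Finset.sum_eq_zero fun j _ => by simp [B, hA]]
  simp [B, hA, submatrix]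

theorem det_setIntegral_eq_setIntegral_det {ι : Type*} [Fintype ι] [DecidableEq ι]
    (f : ι → ℝ → ℝ) (hf : ∀ i, Continuous (f i)) (a b : ι → ℝ) :
    det (of fun i j => ∫ t in Set.Icc (a j) (b j), f i t) =
      ∫ z in Set.univ.pi fun j => Set.Icc (a j) (b j), det (of fun i j => f i (z j)) := by
  have hprod (σ : Equiv.Perm ι) : ∫ z in Set.univ.pi fun j => Set.Icc (a j) (b j),
      ∏ j, f (σ j) (z j) = ∏ j, ∫ t in Set.Icc (a j) (b j), f (σ j) t := by
    rw [volume_pi, Measure.restrict_pi_pi, integral_fintype_prod_eq_prod]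
  have hint (σ : Equiv.Perm ι) : IntegrableOn (fun z : ι → ℝ => ∏ j, f (σ j) (z j))
      (Set.univ.pi fun j => Set.Icc (a j) (b j)) :=
    (continuous_finsetProd _ fun j _ => (hf (σ j)).comp (continuous_apply j)).continuousOn
      |>.integrableOn_compact (isCompact_univ_pi fun _ => isCompact_Icc)
  simp only [det_apply, of_apply, Units.smul_def, zsmul_eq_mul]
  rw [integral_finsetSum _ fun σ _ => (hint σ).const_mul _]
  exact Finset.sum_congr rfl fun σ _ => by rw [integral_const_mul, hprod]

end Matrix

theorem mul_integral_exp_mul (c a b : ℝ) :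
    c * ∫ t in a..b, exp (c * t) = exp (c * b) - exp (c * a) := by
  rw [intervalIntegral.mul_integral_comp_mul_left, integral_exp]

theorem vandermonde_eq_det (n : ℕ) (x : Fin n → ℝ) :
    vandermonde n x = Matrix.det (Matrix.of fun i j : Fin n => x j ^ (i : ℕ)) := by
  rw [vandermonde, ← Matrix.det_vandermonde, ← Matrix.det_transpose]
  rfl

theorem vandermonde_succ (n : ℕ) (x : Fin (n + 1) → ℝ) :
    vandermonde (n + 1) x = (∏ i : Fin n, (x i.succ - x 0)) * vandermonde n fun i => x i.succ := by
  simp only [vandermonde, Fin.prod_univ_succ, Fin.prod_Ioi_zero, Fin.prod_Ioi_succ]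

theorem vandermonde_sub_const (n : ℕ) (x : Fin n → ℝ) (c : ℝ) :
    vandermonde n (fun i => x i - c) = vandermonde n x := by
  simp only [vandermonde, sub_sub_sub_cancel_right]

theorem vandermonde_nonneg {n : ℕ} {x : Fin n → ℝ} (hx : Monotone x) : 0 ≤ vandermonde n x :=
  prod_nonneg fun _ _ => prod_nonneg fun _ hj => sub_nonneg.mpr (hx (mem_Ioi.mp hj).le)

theorem continuous_vandermonde (n : ℕ) : Continuous (vandermonde n) := by
  unfold vandermonde
  fun_prop

def interlacingBox {n : ℕ} (y : Fin (n + 1) → ℝ) : Set (Fin n → ℝ) :=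
  Set.univ.pi fun j => Set.Icc (y j.castSucc) (y j.succ)

theorem isCompact_interlacingBox {n : ℕ} (y : Fin (n + 1) → ℝ) :
    IsCompact (interlacingBox y) :=
  isCompact_univ_pi fun _ => isCompact_Icc

theorem measurableSet_interlacingBox {n : ℕ} (y : Fin (n + 1) → ℝ) :
    MeasurableSet (interlacingBox y) :=
  MeasurableSet.univ_pi fun _ => measurableSet_Icc

theorem monotone_of_mem_interlacingBox {n : ℕ} {y : Fin (n + 1) → ℝ} {z : Fin n → ℝ}
    (hy : Monotone y) (hz : z ∈ interlacingBox y) : Monotone z := by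
  intro j k hjk
  obtain rfl | hjk := hjk.eq_or_lt
  · rfl
  calc z j ≤ y j.succ := (hz j (Set.mem_univ _)).2
    _ ≤ y k.castSucc := hy (Fin.succ_le_castSucc_iff.mpr hjk)
    _ ≤ z k := (hz k (Set.mem_univ _)).1

theorem prod_exp_le_of_mem_interlacingBox {n : ℕ} {x : Fin n → ℝ} {y : Fin (n + 1) → ℝ}
    {z : Fin n → ℝ} (hx : ∀ i, 0 ≤ x i) (hz : z ∈ interlacingBox y) :
    ∏ i, exp (x i * y i.rev.castSucc) ≤ ∏ i, exp (x i * z i.rev) :=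
  prod_le_prod (fun _ _ => (exp_pos _).le) fun i _ =>
    exp_le_exp.mpr (mul_le_mul_of_nonneg_left (hz _ (Set.mem_univ _)).1 (hx i))

theorem setIntegral_Icc_eq_intervalIntegral {a b : ℝ} (hab : a ≤ b) (f : ℝ → ℝ) :
    ∫ t in Set.Icc a b, f t = ∫ t in a..b, f t := by
  rw [intervalIntegral.integral_of_le hab, integral_Icc_eq_integral_Ioc]

theorem factorial_mul_setIntegral_interlacingBox_vandermonde {n : ℕ} {y : Fin (n + 1) → ℝ}
    (hy : Monotone y) :
    (n ! : ℝ) * ∫ z in interlacingBox y, vandermonde n z = vandermonde (n + 1) y := by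
  have hentry (i j : Fin n) :
      ((i : ℕ) + 1 : ℝ) * ∫ t in Set.Icc (y j.castSucc) (y j.succ), t ^ (i : ℕ) =
        y j.succ ^ ((i : ℕ) + 1) - y j.castSucc ^ ((i : ℕ) + 1) := by
    rw [setIntegral_Icc_eq_intervalIntegral (hy (Fin.castSucc_le_succ j)), integral_pow]
    field_simp
  have hfact : ∏ i : Fin n, ((i : ℕ) + 1 : ℝ) = n ! := by
    rw [Fin.prod_univ_eq_prod_range (fun k => (k : ℝ) + 1), ← prod_range_add_one_eq_factorial]
    push_cast
    rfl
  calc (n ! : ℝ) * ∫ z in interlacingBox y, vandermonde n z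
      = (∏ i : Fin n, ((i : ℕ) + 1 : ℝ)) *
          (Matrix.of fun i j : Fin n =>
            ∫ t in Set.Icc (y j.castSucc) (y j.succ), t ^ (i : ℕ)).det := by
        rw [hfact, Matrix.det_setIntegral_eq_setIntegral_det _ fun _ => continuous_pow _]
        simp_rw [vandermonde_eq_det]
        rfl
    _ = (Matrix.of fun i j : Fin n =>
          y j.succ ^ ((i : ℕ) + 1) - y j.castSucc ^ ((i : ℕ) + 1)).det := by
        rw [← Matrix.det_mul_column]
        congr 1
        ext i j
        exact hentry i j
    _ = vandermonde (n + 1) y := by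
        rw [vandermonde_eq_det, Matrix.det_eq_det_sub_of_row_zero_eq_one _ fun _ => by simp]
        simp [Fin.val_succ]

theorem det_exp_mul_eq_prod_mul_setIntegral_interlacingBox {n : ℕ} {x y : Fin (n + 1) → ℝ}
    (hx0 : x 0 = 0) (hy : Monotone y) :
    (Matrix.of fun i j => exp (x i * y j)).det =
      (∏ i : Fin n, x i.succ) *
        ∫ z in interlacingBox y, (Matrix.of fun i j : Fin n => exp (x i.succ * z j)).det := by
  have hentry (i j : Fin n) : exp (x i.succ * y j.succ) - exp (x i.succ * y j.castSucc) =
      x i.succ * ∫ t in Set.Icc (y j.castSucc) (y j.succ), exp (x i.succ * t) := by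
    rw [setIntegral_Icc_eq_intervalIntegral (hy (Fin.castSucc_le_succ j)), mul_integral_exp_mul]
  rw [Matrix.det_eq_det_sub_of_row_zero_eq_one _ fun _ => by simp [hx0],
    interlacingBox,
    ← Matrix.det_setIntegral_eq_setIntegral_det (fun (i : Fin n) t => exp (x i.succ * t))
      fun _ => by fun_prop,
    ← Matrix.det_mul_column]
  congr 1
  ext i j
  exact hentry i j

theorem det_exp_mul_eq_prod_mul_det_exp_sub {n : ℕ} (x y : Fin n → ℝ) (c : ℝ) :
    (Matrix.of fun i j => exp (x i * y j)).det =
      (∏ j, exp (c * y j)) * (Matrix.of fun i j => exp ((x i - c) * y j)).det := by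
  rw [mul_comm, ← Matrix.det_diagonal, ← Matrix.det_mul]
  congr 1
  ext i j
  rw [Matrix.mul_diagonal, Matrix.of_apply, Matrix.of_apply, ← exp_add]
  ring_nf

theorem prod_exp_mul_rev_eq_prod_mul_prod_exp_sub {n : ℕ} (x y : Fin n → ℝ) (c : ℝ) :
    ∏ i, exp (x i * y i.rev) = (∏ j, exp (c * y j)) * ∏ i, exp ((x i - c) * y i.rev) := by
  rw [← Equiv.prod_comp Fin.revPerm (fun j => exp (c * y j)), ← prod_mul_distrib]
  refine prod_congr rfl fun i _ => ?_
  rw [Fin.revPerm_apply, ← exp_add]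
  ring_nf

theorem vandermonde_mul_vandermonde_mul_prod_exp_le_succ_of_apply_zero {n : ℕ}
    (ih : ∀ x y : Fin n → ℝ, Monotone x → Monotone y →
      vandermonde n x * vandermonde n y * ∏ i, exp (x i * y i.rev) ≤
        (∏ k ∈ range n, (k ! : ℝ)) * (Matrix.of fun i j => exp (x i * y j)).det)
    {x y : Fin (n + 1) → ℝ} (hx : Monotone x) (hy : Monotone y) (hx0 : x 0 = 0) :
    vandermonde (n + 1) x * vandermonde (n + 1) y * ∏ i, exp (x i * y i.rev) ≤
      (∏ k ∈ range (n + 1), (k ! : ℝ)) * (Matrix.of fun i j => exp (x i * y j)).det := by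
  set Q := ∏ i : Fin n, exp (x i.succ * y i.rev.castSucc)
  have hx_succ : ∀ i : Fin n, 0 ≤ x i.succ := fun i => hx0 ▸ hx (Fin.zero_le _)
  have hx_tail : Monotone fun i : Fin n => x i.succ := hx.comp Fin.strictMono_succ.monotone
  have hantidiag : ∏ i, exp (x i * y i.rev) = Q := by
    simp [Fin.prod_univ_succ, hx0, Fin.rev_succ, Q]
  have hpointwise : ∀ z ∈ interlacingBox y,
      vandermonde n (fun i => x i.succ) * Q * vandermonde n z ≤
        (∏ k ∈ range n, (k ! : ℝ)) * (Matrix.of fun i j => exp (x i.succ * z j)).det := by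
    intro z hz
    have hz_mono := monotone_of_mem_interlacingBox hy hz
    calc vandermonde n (fun i => x i.succ) * Q * vandermonde n z
        = vandermonde n (fun i => x i.succ) * vandermonde n z * Q := mul_right_comm _ _ _
      _ ≤ vandermonde n (fun i => x i.succ) * vandermonde n z *
            ∏ i : Fin n, exp (x i.succ * z i.rev) :=
          mul_le_mul_of_nonneg_left (prod_exp_le_of_mem_interlacingBox hx_succ hz)
            (mul_nonneg (vandermonde_nonneg hx_tail) (vandermonde_nonneg hz_mono))
      _ ≤ _ := ih _ _ hx_tail hz_mono
  have hintegral : vandermonde n (fun i => x i.succ) * Q *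
        ∫ z in interlacingBox y, vandermonde n z ≤
      (∏ k ∈ range n, (k ! : ℝ)) *
        ∫ z in interlacingBox y, (Matrix.of fun i j => exp (x i.succ * z j)).det := by
    rw [← integral_const_mul, ← integral_const_mul]
    refine setIntegral_mono_on ?_ ?_ (measurableSet_interlacingBox y) hpointwise <;>
      refine (Continuous.continuousOn ?_).integrableOn_compact (isCompact_interlacingBox y)
    · exact (continuous_vandermonde n).const_mul _
    · fun_prop
  calc vandermonde (n + 1) x * vandermonde (n + 1) y * ∏ i, exp (x i * y i.rev)
      = (∏ i : Fin n, x i.succ) * ((n ! : ℝ) * (vandermonde n (fun i => x i.succ) * Q *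
          ∫ z in interlacingBox y, vandermonde n z)) := by
        rw [vandermonde_succ, hx0, hantidiag,
          ← factorial_mul_setIntegral_interlacingBox_vandermonde hy]
        simp only [sub_zero]
        ring
    _ ≤ (∏ i : Fin n, x i.succ) * ((n ! : ℝ) * ((∏ k ∈ range n, (k ! : ℝ)) *
          ∫ z in interlacingBox y, (Matrix.of fun i j => exp (x i.succ * z j)).det)) :=
        mul_le_mul_of_nonneg_left (mul_le_mul_of_nonneg_left hintegral (by positivity))
          (prod_nonneg fun i _ => hx_succ i)
    _ = (∏ k ∈ range (n + 1), (k ! : ℝ)) * (Matrix.of fun i j => exp (x i * y j)).det := by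
        rw [prod_range_succ, det_exp_mul_eq_prod_mul_setIntegral_interlacingBox hx0 hy]
        ring

theorem vandermonde_mul_vandermonde_mul_prod_exp_le_of_sub_const {n : ℕ} {x y : Fin n → ℝ}
    (c : ℝ)
    (h : vandermonde n (fun i => x i - c) * vandermonde n y *
        ∏ i, exp ((x i - c) * y i.rev) ≤
      (∏ k ∈ range n, (k ! : ℝ)) * (Matrix.of fun i j => exp ((x i - c) * y j)).det) :
    vandermonde n x * vandermonde n y * ∏ i, exp (x i * y i.rev) ≤
      (∏ k ∈ range n, (k ! : ℝ)) * (Matrix.of fun i j => exp (x i * y j)).det := by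
  rw [vandermonde_sub_const] at h
  rw [det_exp_mul_eq_prod_mul_det_exp_sub x y c, prod_exp_mul_rev_eq_prod_mul_prod_exp_sub x y c,
    mul_left_comm, mul_left_comm (∏ k ∈ range n, (k ! : ℝ))]
  exact mul_le_mul_of_nonneg_left h (prod_nonneg fun _ _ => (exp_pos _).le)

theorem vandermonde_mul_vandermonde_mul_prod_exp_le {n : ℕ} {x y : Fin n → ℝ}
    (hx : Monotone x) (hy : Monotone y) :
    vandermonde n x * vandermonde n y * ∏ i, exp (x i * y i.rev) ≤
      (∏ k ∈ range n, (k ! : ℝ)) * (Matrix.of fun i j => exp (x i * y j)).det := by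
  induction n with
  | zero => simp [vandermonde]
  | succ n ih =>
    refine vandermonde_mul_vandermonde_mul_prod_exp_le_of_sub_const (x 0) ?_
    exact vandermonde_mul_vandermonde_mul_prod_exp_le_succ_of_apply_zero (fun _ _ => ih)
      (fun i j hij => sub_le_sub_right (hx hij) _) hy (sub_self _)

theorem cConst_le_inv_prod_factorial (n : ℕ) : cConst n ≤ (∏ k ∈ range n, (k ! : ℝ))⁻¹ := by
  refine inv_anti₀ (prod_pos fun k _ => mod_cast k.factorial_pos) ?_
  rw [← Nat.cast_prod, Nat.cast_le, ← Finset.Ico_add_one_right_eq_Icc, prod_Ico_eq_prod_range,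
    Nat.add_sub_cancel]
  exact prod_le_prod' fun k _ => Nat.factorial_le (by omega)

theorem stmt12 (n : ℕ) (x y : Fin n → ℝ) (hx : StrictMono x) (hy : StrictMono y) :
    cConst n * vandermonde n x * vandermonde n y * ∏ i, Real.exp (x i * y i.rev)
      ≤ Matrix.det (Matrix.of fun i j : Fin n => Real.exp (x i * y j)) := by
  have hmain := vandermonde_mul_vandermonde_mul_prod_exp_le hx.monotone hy.monotone
  have hnonneg : 0 ≤ vandermonde n x * vandermonde n y * ∏ i, exp (x i * y i.rev) :=
    mul_nonneg (mul_nonneg (vandermonde_nonneg hx.monotone) (vandermonde_nonneg hy.monotone))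
      (prod_nonneg fun _ _ => (exp_pos _).le)
  calc cConst n * vandermonde n x * vandermonde n y * ∏ i, exp (x i * y i.rev)
      = cConst n * (vandermonde n x * vandermonde n y * ∏ i, exp (x i * y i.rev)) := by ring
    _ ≤ (∏ k ∈ range n, (k ! : ℝ))⁻¹ *
          (vandermonde n x * vandermonde n y * ∏ i, exp (x i * y i.rev)) :=
        mul_le_mul_of_nonneg_right (cConst_le_inv_prod_factorial n) hnonneg
    _ ≤ _ := by
        rw [inv_mul_le_iff₀ (prod_pos fun k _ => mod_cast k.factorial_pos)]
        exact hmain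
end

section
/- Let x_1 < ... < x_n and y_1 < ... < y_n be real numbers. Then det(exp(x_i y_j))_{i,j=1}^n > 0. -/
/-!
A nonzero exponential sum `∑ c_j exp (μ_j t)` with `n` distinct frequencies has fewer than `n`
real zeros: dividing by `exp (μ_0 t)` removes the lowest frequency without moving the zeros, and
by Rolle the derivative, an exponential sum with `n - 1` frequencies, has a zero between any two.
Hence the matrix `exp (x_i y_j)` is nonsingular whenever `x` and `y` are strictly increasing.
The strictly increasing `y` form a convex set, so the determinant has constant sign on it; at
`y_j = j` it is the Vandermonde determinant of the increasing numbers `exp x_i`, which is positive.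
-/

open Finset Matrix

theorem exists_strictMono_deriv_eq_zero {n : ℕ} {g : ℝ → ℝ} (hg : Continuous g)
    {ξ : Fin (n + 1) → ℝ} (hξ : StrictMono ξ) (hzero : ∀ i, g (ξ i) = 0) :
    ∃ η : Fin n → ℝ, StrictMono η ∧ ∀ i, deriv g (η i) = 0 := by
  have rolle : ∀ i : Fin n, ∃ t ∈ Set.Ioo (ξ i.castSucc) (ξ i.succ), deriv g t = 0 := fun i =>
    exists_deriv_eq_zero (hξ i.castSucc_lt_succ) hg.continuousOn (by rw [hzero, hzero])
  choose η hη hη_deriv using rolle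
  refine ⟨η, fun i k hik => ?_, hη_deriv⟩
  calc η i < ξ i.succ := (hη i).2
    _ ≤ ξ k.castSucc := hξ.monotone (Fin.succ_le_castSucc_iff.mpr hik)
    _ < η k := (hη k).1

theorem det_vandermonde_pos {R : Type*} [CommRing R] [LinearOrder R] [IsStrictOrderedRing R]
    {n : ℕ} {v : Fin n → R} (hv : StrictMono v) : 0 < (vandermonde v).det := by
  rw [det_vandermonde]
  exact prod_pos fun i _ => prod_pos fun j hj => sub_pos.mpr (hv (mem_Ioi.mp hj))

theorem convex_setOf_strictMono {ι : Type*} [PartialOrder ι] :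
    Convex ℝ {y : ι → ℝ | StrictMono y} := by
  intro y (hy : StrictMono y) z (hz : StrictMono z) a b ha hb hab
  rcases ha.eq_or_lt with rfl | ha
  · simp_all
  · show StrictMono fun i => a * y i + b * z i
    exact (hy.const_mul ha).add_monotone (hz.monotone.const_mul hb)

noncomputable def expSum {n : ℕ} (c μ : Fin n → ℝ) (t : ℝ) : ℝ :=
  ∑ j, c j * Real.exp (μ j * t)

namespace expSum

variable {n : ℕ}

theorem hasDerivAt (c μ : Fin n → ℝ) (t : ℝ) :
    HasDerivAt (expSum c μ) (expSum (c * μ) μ t) t := by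
  simp only [expSum, Pi.mul_apply]
  refine HasDerivAt.fun_sum fun j _ => ?_
  have h := ((hasDerivAt_id t).const_mul (μ j)).exp.const_mul (c j)
  simp only [id, mul_one] at h
  exact h.congr_deriv (by ring)

theorem deriv_eq (c μ : Fin n → ℝ) : deriv (expSum c μ) = expSum (c * μ) μ :=
  funext fun t => (hasDerivAt c μ t).deriv

theorem continuous (c μ : Fin n → ℝ) : Continuous (expSum c μ) :=
  continuous_iff_continuousAt.mpr fun t => (hasDerivAt c μ t).continuousAt

theorem sub_const (c μ : Fin n → ℝ) (a t : ℝ) :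
    expSum c (fun j => μ j - a) t = expSum c μ t / Real.exp (a * t) := by
  simp only [expSum, sum_div, sub_mul, Real.exp_sub, mul_div_assoc]

theorem eq_add_expSum_succ (c μ : Fin (n + 1) → ℝ) (t : ℝ) :
    expSum c μ t = c 0 * Real.exp (μ 0 * t) + expSum (fun j => c j.succ) (fun j => μ j.succ) t :=
  Fin.sum_univ_succ _

theorem coeffs_eq_zero_of_strictMono_zeros {c μ ξ : Fin n → ℝ} (hμ : StrictMono μ)
    (hξ : StrictMono ξ) (hzero : ∀ i, expSum c μ (ξ i) = 0) : c = 0 := by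
  induction n with
  | zero => exact Subsingleton.elim _ _
  | succ n ih =>
    set ν : Fin (n + 1) → ℝ := fun j => μ j - μ 0
    have hν0 : ν 0 = 0 := sub_self _
    have hν_pos (j : Fin n) : 0 < ν j.succ := sub_pos.mpr (hμ j.succ_pos)
    have hzero' (i) : expSum c ν (ξ i) = 0 := by simp [ν, sub_const, hzero]
    obtain ⟨η, hη, hη_zero⟩ := exists_strictMono_deriv_eq_zero (continuous c ν) hξ hzero'
    have hderiv (i) : expSum (fun j => c j.succ * ν j.succ) (fun j => ν j.succ) (η i) = 0 := by
      simpa [deriv_eq, eq_add_expSum_succ, hν0] using hη_zero i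
    have hν_succ : StrictMono fun j : Fin n => ν j.succ := fun i k h => by
      simpa [ν] using hμ (Fin.succ_lt_succ_iff.mpr h)
    have hc_succ (j : Fin n) : c j.succ = 0 := by
      have := congr_fun (ih hν_succ hη hderiv) j
      exact (mul_eq_zero.mp this).resolve_right (hν_pos j).ne'
    have hc0 : c 0 = 0 := by
      have h := hzero 0
      rw [eq_add_expSum_succ] at h
      simpa [hc_succ, expSum] using h
    funext j
    exact Fin.cases hc0 hc_succ j

end expSum

theorem IsPreconnected.pos_of_ne_zero {X : Type*} [TopologicalSpace X] {s : Set X}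
    (hs : IsPreconnected s) {f : X → ℝ} (hf : ContinuousOn f s) (hne : ∀ x ∈ s, f x ≠ 0)
    {a b : X} (ha : a ∈ s) (hb : b ∈ s) (hfa : 0 < f a) : 0 < f b := by
  by_contra! hfb
  obtain ⟨x, hx, hfx⟩ := hs.intermediate_value hb ha hf ⟨hfb, hfa.le⟩
  exact hne x hx hfx

theorem det_exp_mul_ne_zero {n : ℕ} {x y : Fin n → ℝ} (hx : StrictMono x) (hy : StrictMono y) :
    (of fun i j => Real.exp (x i * y j)).det ≠ 0 := by
  intro hdet
  obtain ⟨v, hv, hMv⟩ := exists_mulVec_eq_zero_iff.mpr hdet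
  refine hv (expSum.coeffs_eq_zero_of_strictMono_zeros hy hx fun i => ?_)
  rw [← Pi.zero_apply (M := fun _ => ℝ) i, ← hMv]
  simp only [expSum, mulVec, dotProduct, of_apply]
  exact sum_congr rfl fun j _ => by rw [mul_comm (x i)]; ring

theorem det_exp_mul_natCast_pos {n : ℕ} {x : Fin n → ℝ} (hx : StrictMono x) :
    0 < (of fun i (j : Fin n) => Real.exp (x i * j)).det := by
  have h : (of fun i (j : Fin n) => Real.exp (x i * j)) = vandermonde (Real.exp ∘ x) := by
    ext i j
    rw [of_apply, vandermonde_apply, Function.comp_apply, ← Real.exp_nat_mul, mul_comm]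
  rw [h]
  exact det_vandermonde_pos (Real.exp_strictMono.comp hx)

theorem stmt13 (n : ℕ) (x y : Fin n → ℝ) (hx : StrictMono x) (hy : StrictMono y) :
    0 < Matrix.det (Matrix.of fun i j : Fin n => Real.exp (x i * y j)) := by
  have hF : Continuous fun y : Fin n → ℝ => (of fun i j => Real.exp (x i * y j)).det := by
    fun_prop
  have hnat : StrictMono fun j : Fin n => (j : ℝ) := Nat.strictMono_cast.comp Fin.val_strictMono
  exact convex_setOf_strictMono.isPreconnected.pos_of_ne_zero hF.continuousOn
    (fun z hz => det_exp_mul_ne_zero hx hz) hnat hy (det_exp_mul_natCast_pos hx)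
end

section
/- For a standard one-dimensional Brownian motion (X_t) started at x with |x| ≤ L√t, L ≥ 1, t > 0, and 0 ≤ a ≤ 1, there is an absolute constant c_0 < ∞ such that P[X_t ∈ [0,a]] ≤ c_0 · L · a · t^{-1/2} · P[X_t < a]. -/
/-!
The density of `N(x, t)` decreases with the distance to `x`, so on `[0, a]` it is at most its
value at `c = min x a`, the point of `(-∞, a]` nearest to `x`; hence `P[X ∈ [0, a]] ≤ a p(c)`.
Since `|x - c| ≤ L √t`, moving left from `c` by `δ = √t / L` raises the exponent `(y - x)² / 2t`
by at most `3 / 2`, so `P[X < a] ≥ P[X ∈ [c - δ, c)] ≥ δ e^{-3/2} p(c)`.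
-/

open ProbabilityTheory MeasureTheory Real NNReal Set

namespace ProbabilityTheory

variable {μ : ℝ} {v : ℝ≥0}

theorem gaussianPDFReal_le_exp_mul {y z K : ℝ} (h : (y - μ) ^ 2 ≤ (z - μ) ^ 2 + 2 * v * K) :
    gaussianPDFReal μ v z ≤ exp K * gaussianPDFReal μ v y := by
  rcases eq_or_ne v 0 with rfl | hv
  · simp
  have hv' : (0 : ℝ) < 2 * v := by positivity
  rw [gaussianPDFReal, gaussianPDFReal, mul_left_comm, ← exp_add]
  gcongr
  rw [add_comm, div_add' _ _ _ hv'.ne', div_le_div_iff_of_pos_right hv']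
  linarith

theorem gaussianPDF_le_exp_mul {y z K : ℝ} (h : (y - μ) ^ 2 ≤ (z - μ) ^ 2 + 2 * v * K) :
    gaussianPDF μ v z ≤ ENNReal.ofReal (exp K) * gaussianPDF μ v y := by
  rw [gaussianPDF, gaussianPDF, ← ENNReal.ofReal_mul (exp_pos K).le]
  exact ENNReal.ofReal_le_ofReal (gaussianPDFReal_le_exp_mul h)

theorem gaussianPDF_le_of_sq_sub_le {y z : ℝ} (h : (y - μ) ^ 2 ≤ (z - μ) ^ 2) :
    gaussianPDF μ v z ≤ gaussianPDF μ v y := by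
  simpa using gaussianPDF_le_exp_mul (v := v) (K := 0) (by simpa using h)

theorem gaussianReal_le_gaussianPDF_mul_volume (hv : v ≠ 0) {s : Set ℝ} {c : ℝ}
    (hc : ∀ y ∈ s, (c - μ) ^ 2 ≤ (y - μ) ^ 2) :
    gaussianReal μ v s ≤ gaussianPDF μ v c * volume s := by
  rw [gaussianReal_apply μ hv, ← setLIntegral_const]
  exact setLIntegral_mono measurable_const fun y hy ↦ gaussianPDF_le_of_sq_sub_le (hc y hy)

theorem gaussianPDF_mul_volume_le_gaussianReal (hv : v ≠ 0) {s : Set ℝ} {b : ℝ}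
    (hb : ∀ y ∈ s, (y - μ) ^ 2 ≤ (b - μ) ^ 2) :
    gaussianPDF μ v b * volume s ≤ gaussianReal μ v s := by
  rw [gaussianReal_apply μ hv, ← setLIntegral_const]
  exact setLIntegral_mono (measurable_gaussianPDF μ v) fun y hy ↦
    gaussianPDF_le_of_sq_sub_le (hb y hy)

end ProbabilityTheory

theorem sq_min_sub_le_of_le {x a y : ℝ} (hy : y ≤ a) : (min x a - x) ^ 2 ≤ (y - x) ^ 2 := by
  rcases le_total x a with h | h
  · simp [min_eq_left h, sq_nonneg]
  · rw [min_eq_right h]; nlinarith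

theorem sub_min_le_abs {x a : ℝ} (ha : 0 ≤ a) : x - min x a ≤ |x| := by
  rcases le_total x a with h | h
  · simp [min_eq_left h]
  · rw [min_eq_right h]; linarith [le_abs_self x]

theorem sq_sub_div_sub_le {c x s L : ℝ} (hL : 1 ≤ L) (hs : 0 ≤ s) (hxc : x - c ≤ L * s) : (c - s / L - x) ^ 2 ≤ (c - x) ^ 2 + 3 * s ^ 2 := by
  have hδ : 0 ≤ s / L := by positivity
  have hδL : s / L * L = s := div_mul_cancel₀ _ (by positivity)
  have hδ_mul : s / L * (x - c) ≤ s ^ 2 :=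
    calc s / L * (x - c) ≤ s / L * (L * s) := by gcongr
      _ = s ^ 2 := by rw [← mul_assoc, hδL, sq]
  have hδ_sq : (s / L) ^ 2 ≤ s ^ 2 := by gcongr; exact div_le_self hs hL
  nlinarith

theorem stmt16 :
    ∃ c₀ : ℝ, 0 < c₀ ∧
      ∀ (L : ℝ) (t : NNReal) (x a : ℝ),
        1 ≤ L → 0 < (t : ℝ) → |x| ≤ L * Real.sqrt t → 0 ≤ a → a ≤ 1 →
        gaussianReal x t (Set.Icc 0 a)
          ≤ ENNReal.ofReal (c₀ * L * a / Real.sqrt t) * gaussianReal x t (Set.Iio a) := by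
  refine ⟨exp (3 / 2), exp_pos _, fun L t x a hL ht hx ha _ ↦ ?_⟩
  have ht0 : t ≠ 0 := (NNReal.coe_pos.mp ht).ne'
  have hst : 0 < √(t : ℝ) := sqrt_pos.mpr ht
  set c := min x a
  set δ := √(t : ℝ) / L
  have hcx : c ≤ x := min_le_left x a
  have hsteep : (c - δ - x) ^ 2 ≤ (c - x) ^ 2 + 2 * t * (3 / 2) := by
    linarith [sq_sub_div_sub_le hL hst.le ((sub_min_le_abs ha).trans hx), sq_sqrt ht.le]
  have hscale : exp (3 / 2) * a = exp (3 / 2) * L * a / √(t : ℝ) * δ := by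
    simp only [δ]
    field_simp
  calc gaussianReal x t (Icc 0 a) ≤ gaussianPDF x t c * volume (Icc 0 a) :=
        gaussianReal_le_gaussianPDF_mul_volume ht0 fun y hy ↦ sq_min_sub_le_of_le hy.2
    _ ≤ ENNReal.ofReal (exp (3 / 2)) * gaussianPDF x t (c - δ) * ENNReal.ofReal a := by
        rw [Real.volume_Icc, sub_zero]
        gcongr
        exact gaussianPDF_le_exp_mul hsteep
    _ = ENNReal.ofReal (exp (3 / 2) * L * a / √(t : ℝ)) *
          (gaussianPDF x t (c - δ) * volume (Ico (c - δ) c)) := by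
        rw [Real.volume_Ico, sub_sub_cancel, mul_right_comm, ← ENNReal.ofReal_mul (exp_pos _).le,
          hscale, ENNReal.ofReal_mul (by positivity)]
        ring
    _ ≤ ENNReal.ofReal (exp (3 / 2) * L * a / √(t : ℝ)) * gaussianReal x t (Iio a) := by
        gcongr
        refine (gaussianPDF_mul_volume_le_gaussianReal ht0 fun y hy ↦ ?_).trans
          (measure_mono fun y hy ↦ hy.2.trans_le (min_le_right x a))
        nlinarith [hy.1, hy.2]
end
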